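/- arXiv:1808.02003 — 2 statements merged into one kernel-verified Lean document; each statement's English description precedes it below -/
import Mathlib

section
/- For every functor B : [ℓ] ⥤ Rep_K(Q) there exists a short exact sequence 0 → N' → N → B → 0 in the functor category in which both N and N' are filtered. Explicitly, one may take N(k) = ⊕_{j=1}^{k} B(j) with transition maps N(k) → N(k+1) the canonical inclusions of direct summands, and with the epimorphism N(k) → B(k) given on the j-th summand by the composite transition map B(j) → B(k) (the identity for j = k); then N' = ker(N → B) is filtered and satisfies N'(1) = 0. -/
/-!
`N(k) = ⨁_{j ≤ k} B(j)` has split monomorphisms (inclusions of summands) as transition maps, and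
`N(k) → B(k)` is split by the summand `j = k`, so `N → B` is an epimorphism. Its kernel `N'` embeds
into `N` compatibly with the transition maps, hence is filtered as well; at a minimal index `N → B`
is an isomorphism, so `N'` vanishes there.
-/

open CategoryTheory CategoryTheory.Limits

attribute [local instance] CategoryTheory.Abelian.hasFiniteBiproducts

lemma CategoryTheory.NatTrans.mono_map_of_mono_app {J C : Type*} [Category J] [Category C]
    {F G : J ⥤ C} (α : F ⟶ G) {j k : J} (f : j ⟶ k) [Mono (α.app j)] [Mono (G.map f)] :
    Mono (F.map f) :=
  have : Mono (F.map f ≫ α.app k) := by rw [α.naturality]; infer_instance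
  mono_of_mono _ (α.app k)

namespace CategoryTheory.Functor

variable {ι C : Type*} [Preorder ι] [∀ k : ι, Finite {j // j ≤ k}]
  [Category C] [Preadditive C] [HasFiniteBiproducts C] (B : ι ⥤ C)

noncomputable def lowerBiproduct : ι ⥤ C where
  obj k := ⨁ fun j : {j // j ≤ k} => B.obj j.1
  map {j k} f := biproduct.desc fun a =>
    biproduct.ι (fun a : {a // a ≤ k} => B.obj a.1) ⟨a.1, a.2.trans (leOfHom f)⟩
  map_id k := biproduct.hom_ext' _ _ fun a => by simp
  map_comp f g := biproduct.hom_ext' _ _ fun a => by simp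

noncomputable def lowerBiproductπ : B.lowerBiproduct ⟶ B where
  app k := biproduct.desc fun a => B.map (homOfLE a.2)
  naturality j k f := biproduct.hom_ext' _ _ fun a => by
    simp only [lowerBiproduct, biproduct.ι_desc_assoc, biproduct.ι_desc, ← B.map_comp]
    rfl

instance lowerBiproduct_map_mono {j k : ι} (f : j ⟶ k) : Mono (B.lowerBiproduct.map f) := by
  classical
  refine SplitMono.mono ⟨biproduct.desc fun a => if ha : a.1 ≤ j then
    biproduct.ι (fun a : {a // a ≤ j} => B.obj a.1) ⟨a.1, ha⟩ else 0, ?_⟩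
  refine biproduct.hom_ext' _ _ fun a => ?_
  simp [lowerBiproduct, a.2]

instance lowerBiproductπ_app_epi (k : ι) : Epi (B.lowerBiproductπ.app k) :=
  SplitEpi.epi ⟨biproduct.ι (fun a : {a // a ≤ k} => B.obj a.1) ⟨k, le_rfl⟩,
    by simp [lowerBiproduct, lowerBiproductπ, homOfLE_refl]⟩

instance lowerBiproductπ_epi : Epi B.lowerBiproductπ :=
  NatTrans.epi_of_epi_app _

lemma lowerBiproductπ_app_mono {k : ι} (hk : ∀ j ≤ k, j = k) :
    Mono (B.lowerBiproductπ.app k) := by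
  refine SplitMono.mono ⟨biproduct.ι (fun a : {a // a ≤ k} => B.obj a.1) ⟨k, le_rfl⟩, ?_⟩
  refine biproduct.hom_ext' _ _ fun ⟨j, hj⟩ => ?_
  obtain rfl := hk j hj
  simp [lowerBiproduct, lowerBiproductπ, homOfLE_refl]

end CategoryTheory.Functor

theorem exists_filtered_resolution
    (K : Type) [Field K] (Q : Type) [Quiver.{1} Q]
    [Fintype Q] [∀ a b : Q, Fintype (a ⟶ b)]
    (hacyclic : ∀ (v : Q) (p : Quiver.Path v v), p = Quiver.Path.nil)
    (ℓ : ℕ) (hℓ : 1 ≤ ℓ)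
    (B : Fin ℓ ⥤ (Paths Q ⥤ ModuleCat.{0} K)) :
    ∃ (N N' : Fin ℓ ⥤ (Paths Q ⥤ ModuleCat.{0} K))
      (i : N' ⟶ N) (p : N ⟶ B) (w : i ≫ p = 0),
      (∀ (j k : Fin ℓ) (h : j ≤ k), Mono (N.map (homOfLE h))) ∧
      (∀ (j k : Fin ℓ) (h : j ≤ k), Mono (N'.map (homOfLE h))) ∧
      (∀ k : Fin ℓ,
        Nonempty (N.obj k ≅ ⨁ (fun j : {j : Fin ℓ // j ≤ k} => B.obj j.1))) ∧
      IsZero (N'.obj ⟨0, hℓ⟩) ∧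
      (ShortComplex.mk i p w).ShortExact := by
  let p := B.lowerBiproductπ
  refine ⟨_, kernel p, kernel.ι p, p, kernel.condition p, fun j k h => inferInstance,
    fun j k h => NatTrans.mono_map_of_mono_app (kernel.ι p) (homOfLE h),
    fun k => ⟨Iso.refl _⟩, ?_, ?_⟩
  · let k₀ : Fin ℓ := ⟨0, hℓ⟩
    have : Mono (p.app k₀) :=
      B.lowerBiproductπ_app_mono fun j hj => le_antisymm hj (Nat.zero_le _)
    refine IsZero.of_mono_eq_zero ((kernel.ι p).app k₀) ((cancel_mono (p.app k₀)).1 ?_)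
    rw [← NatTrans.comp_app, kernel.condition, zero_comp, NatTrans.app_zero]
  · exact { exact := ShortComplex.exact_of_f_is_kernel _ (kernelIsKernel p) }
end

section
/- For a functor B : [ℓ] ⥤ Rep_K(Q), the following are equivalent: (i) B(ℓ) is the zero representation of Q (i.e., B vanishes at the top level ℓ, equivalently B(ℓ, v) = 0 for every vertex v of Q); (ii) every morphism in the functor category from B to any filtered object M is zero. In other words, B lies in the torsion class T of the cotilting torsion pair whose torsion-free class consists of the filtered objects if and only if B(ℓ) = 0. -/
/-!
If `B(ℓ) = 0`, a morphism `f : B ⟶ M` into a filtered `M` satisfies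
`f_j ≫ M(j ≤ ℓ) = B(j ≤ ℓ) ≫ f_ℓ = 0`, and `M(j ≤ ℓ)` is mono, so `f_j = 0`.
Conversely, the maps `B(j ≤ ℓ)` form a morphism from `B` to the constant functor at `B(ℓ)`,
which is filtered; its component at `ℓ` is the identity of `B(ℓ)`, so if it vanishes, `B(ℓ) = 0`.
-/

open CategoryTheory CategoryTheory.Limits

namespace CategoryTheory

variable {J C : Type*} [Preorder J] [Category C] {t : J}

lemma NatTrans.eq_zero_of_isZero_obj_of_isTop [HasZeroMorphisms C] (ht : IsTop t)
    {B M : J ⥤ C} (hB : IsZero (B.obj t)) (hM : ∀ j, Mono (M.map (homOfLE (ht j))))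
    (f : B ⟶ M) : f = 0 := by
  ext j
  have hcomp : f.app j ≫ M.map (homOfLE (ht j)) = 0 := by
    rw [← f.naturality, hB.eq_of_src (f.app t) 0, comp_zero]
  exact zero_of_comp_mono _ hcomp

@[simps]
def Functor.toConstObjOfIsTop (ht : IsTop t) (B : J ⥤ C) :
    B ⟶ (Functor.const J).obj (B.obj t) where
  app j := B.map (homOfLE (ht j))
  naturality _ _ g := by
    dsimp
    rw [Category.comp_id, ← B.map_comp]
    rfl

lemma Functor.toConstObjOfIsTop_app_self (ht : IsTop t) (B : J ⥤ C) :
    (B.toConstObjOfIsTop ht).app t = 𝟙 (B.obj t) := by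
  rw [toConstObjOfIsTop_app, ← B.map_id]
  rfl

lemma Functor.isZero_obj_of_toConstObjOfIsTop_eq_zero [HasZeroMorphisms C] (ht : IsTop t)
    {B : J ⥤ C} (h : B.toConstObjOfIsTop ht = 0) : IsZero (B.obj t) := by
  rw [IsZero.iff_id_eq_zero, ← B.toConstObjOfIsTop_app_self ht, h]
  rfl

end CategoryTheory

theorem torsion_iff_top_level_zero
    (K : Type) [Field K] (Q : Type) [Quiver.{1} Q]
    [Fintype Q] [∀ a b : Q, Fintype (a ⟶ b)]
    (hacyclic : ∀ (v : Q) (p : Quiver.Path v v), p = Quiver.Path.nil)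
    (ℓ : ℕ) (hℓ : 1 ≤ ℓ)
    (B : Fin ℓ ⥤ (Paths Q ⥤ ModuleCat.{0} K)) :
    IsZero (B.obj ⟨ℓ - 1, by omega⟩) ↔
      ∀ (M : Fin ℓ ⥤ (Paths Q ⥤ ModuleCat.{0} K)),
        (∀ (j k : Fin ℓ) (h : j ≤ k), Mono (M.map (homOfLE h))) →
        ∀ f : B ⟶ M, f = 0 := by
  have htop : IsTop (⟨ℓ - 1, by omega⟩ : Fin ℓ) := fun j =>
    Fin.le_def.mpr (by have := j.isLt; dsimp; omega)
  refine ⟨fun hB M hM => NatTrans.eq_zero_of_isZero_obj_of_isTop htop hB fun j => hM _ _ _,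
    fun h => Functor.isZero_obj_of_toConstObjOfIsTop_eq_zero htop (h _ ?_ _)⟩
  intro j k hjk
  exact inferInstanceAs (Mono (𝟙 _))
end
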